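/- arXiv:2007.10165 — 3 statements merged into one kernel-verified Lean document; each statement's English description precedes it below -/
import Mathlib

section
/- Let A, B ⊂ ℙⁿ be disjoint finite sets of points (no vector representing a point of A is proportional to a vector representing a point of B), and let d ∈ ℕ. Assume that the family {L_v^d : v ∈ A} is linearly independent in R_d and likewise for {L_v^d : v ∈ B}. Set Z = A ∪ B. Then the ℂ-vector space dimension of span{L_v^d : v ∈ A} ∩ span{L_v^d : v ∈ B} equals ℓ(Z) − h_Z(d). -/
open MvPolynomial BigOperators

noncomputable section

/-- The linear form `a₀x₀ + ⋯ + a_{N-1}x_{N-1}` associated to a coefficient vector. -/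
def linForm {N : ℕ} (v : Fin N → ℂ) : MvPolynomial (Fin N) ℂ :=
  ∑ i, C (v i) * X i

/-- A finite set of nonzero, pairwise non-proportional vectors, representing a finite
set of points in projective space. -/
def ValidPoints {N : ℕ} (A : Finset (Fin N → ℂ)) : Prop :=
  (∀ v ∈ A, v ≠ 0) ∧ ∀ v ∈ A, ∀ w ∈ A, v ≠ w → ∀ c : ℂ, w ≠ c • v

/-- Two sets of points are (projectively) disjoint: no vector of one is proportional to a
vector of the other. -/
def ProjDisjoint {N : ℕ} (A B : Finset (Fin N → ℂ)) : Prop :=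
  ∀ v ∈ A, ∀ w ∈ B, ∀ c : ℂ, w ≠ c • v

/-- Two sets of points coincide as sets of projective points. -/
def ProjEq {N : ℕ} (A B : Finset (Fin N → ℂ)) : Prop :=
  (∀ v ∈ A, ∃ w ∈ B, ∃ c : ℂ, w = c • v) ∧ (∀ w ∈ B, ∃ v ∈ A, ∃ c : ℂ, w = c • v)

/-- `A` computes the degree-`d` form `T`: `T` lies in the span of the `d`-th powers of the
linear forms associated to the points of `A`. -/
def Computes {N : ℕ} (A : Finset (Fin N → ℂ)) (d : ℕ) (T : MvPolynomial (Fin N) ℂ) : Prop :=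
  T ∈ Submodule.span ℂ ((fun v => linForm v ^ d) '' (A : Set (Fin N → ℂ)))

/-- `A` is a non-redundant decomposition of `T`: it computes `T` and no proper subset does. -/
def NonRedundant {N : ℕ} (A : Finset (Fin N → ℂ)) (d : ℕ)
    (T : MvPolynomial (Fin N) ℂ) : Prop :=
  Computes A d T ∧ ∀ A' ⊂ A, ¬ Computes A' d T

/-- The evaluation map on forms of degree `j`. -/
def evalMap {N : ℕ} (A : Finset (Fin N → ℂ)) (j : ℕ) :
    (homogeneousSubmodule (Fin N) ℂ j) →ₗ[ℂ] (↥A → ℂ) :=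
  LinearMap.pi fun v : ↥A =>
    (aeval (v.1 : Fin N → ℂ)).toLinearMap ∘ₗ (homogeneousSubmodule (Fin N) ℂ j).subtype

/-- The Hilbert function of a finite set of points: the rank of the evaluation map in each
degree, and `0` in negative degrees. -/
def hilb {N : ℕ} (A : Finset (Fin N → ℂ)) (j : ℤ) : ℤ :=
  if j < 0 then 0 else (Module.finrank ℂ (LinearMap.range (evalMap A j.toNat)) : ℤ)

/-- The first difference of the Hilbert function. -/
def Dhilb {N : ℕ} (A : Finset (Fin N → ℂ)) (j : ℤ) : ℤ :=
  hilb A j - hilb A (j - 1)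

/-- `Dhilb Z` takes the values prescribed by the list `l` in degrees `0, …, l.length - 1`. -/
def DhProfile {N : ℕ} (Z : Finset (Fin N → ℂ)) (l : List ℤ) : Prop :=
  ∀ j : ℕ, j < l.length → Dhilb Z (j : ℤ) = l.getD j 0

/-- The homogeneous ideal of a finite set of points: all polynomials vanishing at every
representative vector. -/
def pointsIdeal {N : ℕ} (A : Finset (Fin N → ℂ)) : Ideal (MvPolynomial (Fin N) ℂ) :=
  ⨅ v ∈ A, RingHom.ker (eval v)

/-- The degree-`j` graded piece `(I_A)_j` of the homogeneous ideal of `A`, as a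
`ℂ`-subspace of the polynomial ring. -/
def idealPiece {N : ℕ} (A : Finset (Fin N → ℂ)) (j : ℕ) :
    Submodule ℂ (MvPolynomial (Fin N) ℂ) :=
  (Submodule.restrictScalars ℂ (pointsIdeal A)) ⊓ homogeneousSubmodule (Fin N) ℂ j

/-- The `d`-th Kruskal rank of `A`: the largest `k` (at most `ℓ(A)`) such that for every
subset `A' ⊆ A` with `ℓ(A') ≤ k` the powers `{L_v^d : v ∈ A'}` are linearly independent. -/
def kruskalRank {N : ℕ} (A : Finset (Fin N → ℂ)) (d : ℕ) : ℕ :=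
  sSup {k : ℕ | k ≤ A.card ∧ ∀ A' ⊆ A, A'.card ≤ k →
    LinearIndependent ℂ (fun v : ↥A' => linForm (v.1 : Fin N → ℂ) ^ d)}

/-- The Cayley–Bacharach property `CB(i)`: every form of degree `i` vanishing on `Z`
minus one point also vanishes at that point. -/
def CayleyBacharach {N : ℕ} (Z : Finset (Fin N → ℂ)) (i : ℕ) : Prop :=
  ∀ P ∈ Z, ∀ F : MvPolynomial (Fin N) ℂ, F.IsHomogeneous i →
    (∀ v ∈ Z.erase P, eval v F = 0) → eval P F = 0

end

/-! By Grassmann's formula, `dim (⟨ν_d(A)⟩ ∩ ⟨ν_d(B)⟩) = ℓ(A) + ℓ(B) - dim ⟨ν_d(A ∪ B)⟩`, and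
`ℓ(A) + ℓ(B) = ℓ(Z)` by disjointness. It remains to see that `dim ⟨ν_d(Z)⟩ = h_Z(d)`. Comparing
coefficients of `x^α` (the multinomial coefficients being nonzero), `∑ c_v L_v^d = 0` holds iff
`∑ c_v F(v) = 0` for every form `F` of degree `d`. So the map `c ↦ ∑ c_v L_v^d` has the same kernel
as the transpose of the evaluation map `R_d → ℂ^Z`, hence the same rank as the evaluation map. -/

open MvPolynomial

lemma linForm_eq_sum_smul_X {N : ℕ} (v : Fin N → ℂ) : linForm v = ∑ i, v i • X i := by
  simp [linForm, smul_eq_C_mul]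

lemma coeff_linForm_pow {N : ℕ} (v : Fin N → ℂ) (α : Fin N →₀ ℕ) (d : ℕ) :
    coeff α (linForm v ^ d) =
      if α.degree = d then α.multinomial * eval v (monomial α 1) else 0 := by
  rw [linForm_eq_sum_smul_X, coeff_linearCombination_X_pow_of_fintype, eval_monomial, one_mul,
    Finsupp.degree_apply]
  rfl

section Apolarity

variable {N : ℕ} {ι : Type*} [Fintype ι] (p : ι → Fin N → ℂ) (c : ι → ℂ) (d : ℕ)

lemma sum_smul_linForm_pow_eq_zero_iff :
    ∑ i, c i • linForm (p i) ^ d = 0 ↔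
      ∀ α : Fin N →₀ ℕ, α.degree = d → ∑ i, c i * eval (p i) (monomial α 1) = 0 := by
  have hcoeff : ∀ α : Fin N →₀ ℕ, coeff α (∑ i, c i • linForm (p i) ^ d) =
      if α.degree = d then α.multinomial * ∑ i, c i * eval (p i) (monomial α 1) else 0 := by
    intro α
    simp only [coeff_sum, coeff_smul, coeff_linForm_pow, smul_eq_mul, mul_ite, mul_zero,
      Finset.sum_ite_irrel, Finset.sum_const_zero, Finset.mul_sum]
    simp only [mul_left_comm]
  have hmultinomial : ∀ α : Fin N →₀ ℕ, (α.multinomial : ℂ) ≠ 0 :=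
    fun α => by rw [Finsupp.multinomial_eq]; exact_mod_cast (Nat.multinomial_pos _ _).ne'
  constructor
  · intro h α hα
    have := hcoeff α
    rw [h, coeff_zero, if_pos hα] at this
    exact (mul_eq_zero.mp this.symm).resolve_left (hmultinomial α)
  · intro h
    ext α
    rw [hcoeff, coeff_zero]
    split_ifs with hα
    · rw [h α hα, mul_zero]
    · rfl

lemma sum_mul_eval_eq_zero_iff :
    (∀ F : MvPolynomial (Fin N) ℂ, F.IsHomogeneous d → ∑ i, c i * eval (p i) F = 0) ↔
      ∀ α : Fin N →₀ ℕ, α.degree = d → ∑ i, c i * eval (p i) (monomial α 1) = 0 := by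
  refine ⟨fun h α hα => h _ (isHomogeneous_monomial 1 hα), fun h F hF => ?_⟩
  have hdeg : ∀ α ∈ F.support, α.degree = d := fun α hα => by
    rw [Finsupp.degree_eq_weight_one]
    exact hF (mem_support_iff.mp hα)
  conv_lhs => rw [F.as_sum]
  simp only [map_sum, Finset.mul_sum]
  rw [Finset.sum_comm]
  refine Finset.sum_eq_zero fun α hα => ?_
  have hmonomial : ∀ i, eval (p i) (monomial α (coeff α F)) =
      coeff α F * eval (p i) (monomial α 1) := fun i => by
    simp only [eval_monomial, one_mul]
  simp only [hmonomial, mul_left_comm (c _), ← Finset.mul_sum, h α (hdeg α hα), mul_zero]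

lemma sum_smul_linForm_pow_eq_zero_iff_forall_isHomogeneous :
    ∑ i, c i • linForm (p i) ^ d = 0 ↔
      ∀ F : MvPolynomial (Fin N) ℂ, F.IsHomogeneous d → ∑ i, c i * eval (p i) F = 0 := by
  rw [sum_smul_linForm_pow_eq_zero_iff, sum_mul_eval_eq_zero_iff]

end Apolarity

lemma LinearMap.finrank_range_eq_of_ker_eq {K V W W' : Type*} [Ring K] [AddCommGroup V]
    [Module K V] [AddCommGroup W] [Module K W] [AddCommGroup W'] [Module K W']
    {f : V →ₗ[K] W} {g : V →ₗ[K] W'} (h : LinearMap.ker f = LinearMap.ker g) :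
    Module.finrank K (LinearMap.range f) = Module.finrank K (LinearMap.range g) :=
  (f.quotKerEquivRange.symm.trans
    ((Submodule.quotEquivOfEq _ _ h).trans g.quotKerEquivRange)).finrank_eq

lemma Pi.basisFun_toDual_apply {R ι : Type*} [CommRing R] [Fintype ι] [DecidableEq ι]
    (c x : ι → R) : (Pi.basisFun R ι).toDual c x = ∑ i, c i * x i := by
  conv_lhs => rw [← (Pi.basisFun R ι).sum_repr x]
  simp [-Pi.basisFun_apply, Module.Basis.toDual_apply_left, mul_comm]

lemma evalMap_apply {N : ℕ} (Z : Finset (Fin N → ℂ)) (d : ℕ)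
    (F : homogeneousSubmodule (Fin N) ℂ d) (v : Z) :
    evalMap Z d F v = eval (v : Fin N → ℂ) F :=
  RingHom.congr_fun (coe_aeval_eq_eval _) F.1

theorem finrank_range_evalMap {N : ℕ} (Z : Finset (Fin N → ℂ)) (d : ℕ) :
    Module.finrank ℂ (LinearMap.range (evalMap Z d)) =
      Module.finrank ℂ (Submodule.span ℂ ((fun v => linForm v ^ d) '' (Z : Set (Fin N → ℂ)))) := by
  classical
  let powers := Fintype.linearCombination ℂ fun v : Z => linForm (v : Fin N → ℂ) ^ d
  let pairing := (evalMap Z d).dualMap ∘ₗ (Pi.basisFun ℂ Z).toDualEquiv.toLinearMap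
  have hker : LinearMap.ker pairing = LinearMap.ker powers := by
    ext c
    rw [LinearMap.mem_ker, LinearMap.mem_ker, Fintype.linearCombination_apply,
      sum_smul_linForm_pow_eq_zero_iff_forall_isHomogeneous, LinearMap.ext_iff, Subtype.forall]
    simp [pairing, Pi.basisFun_toDual_apply, evalMap_apply, mem_homogeneousSubmodule]
  rw [← (evalMap Z d).finrank_range_dualMap_eq_finrank_range,
    ← LinearMap.range_comp_of_range_eq_top _ (Pi.basisFun ℂ Z).toDualEquiv.range,
    LinearMap.finrank_range_eq_of_ker_eq hker, Fintype.range_linearCombination,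
    Set.image_eq_range]
  rfl

lemma hilb_natCast {N : ℕ} (Z : Finset (Fin N → ℂ)) (d : ℕ) :
    hilb Z d = Module.finrank ℂ (LinearMap.range (evalMap Z d)) := by
  simp [hilb]

lemma finrank_span_image_pow_linForm {N d : ℕ} {S : Finset (Fin N → ℂ)}
    (h : LinearIndependent ℂ fun v : S => linForm (v : Fin N → ℂ) ^ d) :
    Module.finrank ℂ (Submodule.span ℂ ((fun v => linForm v ^ d) '' (S : Set (Fin N → ℂ)))) =
      S.card := by
  rw [Set.image_eq_range]
  exact (finrank_span_eq_card h).trans (Fintype.card_coe S)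

theorem stmt_0_general {n : ℕ} (d : ℕ) (A B : Finset (Fin (n + 1) → ℂ))
    (hAB : ProjDisjoint A B)
    (hliA : LinearIndependent ℂ (fun v : ↥A => linForm (v.1 : Fin (n + 1) → ℂ) ^ d))
    (hliB : LinearIndependent ℂ (fun v : ↥B => linForm (v.1 : Fin (n + 1) → ℂ) ^ d)) :
    (Module.finrank ℂ
        ↥(Submodule.span ℂ ((fun v => linForm v ^ d) '' (A : Set (Fin (n + 1) → ℂ))) ⊓
          Submodule.span ℂ ((fun v => linForm v ^ d) '' (B : Set (Fin (n + 1) → ℂ)))) : ℤ)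
      = ((A ∪ B).card : ℤ) - hilb (A ∪ B) (d : ℤ) := by
  have hdisj : Disjoint A B :=
    Finset.disjoint_left.mpr fun v hvA hvB => hAB v hvA v hvB 1 (one_smul ℂ v).symm
  have := FiniteDimensional.span_of_finite ℂ ((A : Set (Fin (n + 1) → ℂ)).toFinite.image
    fun v => linForm v ^ d)
  have := FiniteDimensional.span_of_finite ℂ ((B : Set (Fin (n + 1) → ℂ)).toFinite.image
    fun v => linForm v ^ d)
  have hgrassmann := Submodule.finrank_sup_add_finrank_inf_eq
    (Submodule.span ℂ ((fun v => linForm v ^ d) '' (A : Set (Fin (n + 1) → ℂ))))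
    (Submodule.span ℂ ((fun v => linForm v ^ d) '' (B : Set (Fin (n + 1) → ℂ))))
  rw [← Submodule.span_union, ← Set.image_union, ← Finset.coe_union,
    finrank_span_image_pow_linForm hliA, finrank_span_image_pow_linForm hliB] at hgrassmann
  rw [hilb_natCast, finrank_range_evalMap, Finset.card_union_of_disjoint hdisj]
  omega

/-- Grassmann formula for the spans of the `d`-th Veronese images of two
disjoint point sets whose images are linearly independent:
`dim (⟨ν_d(A)⟩ ∩ ⟨ν_d(B)⟩) = ℓ(Z) − h_Z(d)` where `Z = A ∪ B`. -/
theorem stmt_0 {n : ℕ} (d : ℕ) (A B : Finset (Fin (n + 1) → ℂ))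
    (hA : ValidPoints A) (hB : ValidPoints B) (hAB : ProjDisjoint A B)
    (hliA : LinearIndependent ℂ (fun v : ↥A => linForm (v.1 : Fin (n + 1) → ℂ) ^ d))
    (hliB : LinearIndependent ℂ (fun v : ↥B => linForm (v.1 : Fin (n + 1) → ℂ) ^ d)) :
    (Module.finrank ℂ
        ↥(Submodule.span ℂ ((fun v => linForm v ^ d) '' (A : Set (Fin (n + 1) → ℂ))) ⊓
          Submodule.span ℂ ((fun v => linForm v ^ d) '' (B : Set (Fin (n + 1) → ℂ)))) : ℤ)
      = ((A ∪ B).card : ℤ) - hilb (A ∪ B) (d : ℤ) :=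
  stmt_0_general d A B hAB hliA hliB
end

section
/- Let Z ⊂ ℙⁿ be a finite set of points and let i > 0 be an integer with Dh_Z(i) ≤ i. Then Dh_Z(i+1) ≤ Dh_Z(i); consequently, if Dh_Z(i) = 0 then Dh_Z(j) = 0 for every j ≥ i. -/
open MvPolynomial BigOperators

/-!
Choose a linear form `ℓ` vanishing at no point of `Z`. Then `Dh_Z(k + 1)` is the codimension of
`(I_Z + (ℓ))_{k+1}` in `R_{k+1}`, and these spaces are stable under multiplication by the
variables. For a monomial order, that codimension counts the standard monomials of degree `k + 1`
(those that are not leading monomials), and the shadow of the standard monomials of degree `d + 1`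
lies among those of degree `d`. Macaulay's bound in the weak form `|∂M| ≥ min(|M|, d)`, for a set
`M` of monomials of degree `d`, then gives `Dh_Z(i + 1) ≤ Dh_Z(i)` as soon as `Dh_Z(i) ≤ i`.
The bound on the shadow is proved by induction on the number of variables, slicing `M` according
to the exponent of one variable.
-/

open Finset MvPolynomial Module

-- `a k` counts the monomials of a set `M` with exponent `k` in one variable, `s k` bounds the
-- shadow of that slice of `M` in the remaining variables.
theorem min_sum_le_sum_max (d : ℕ) (a s : ℕ → ℕ) (hs : ∀ k ≤ d, min (a k) (d - k) ≤ s k) :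
    min (∑ k ∈ range (d + 1), a k) d ≤ ∑ k ∈ range (d + 1), max (s k) (a (k + 1)) := by
  induction d generalizing a s with
  | zero => simp
  | succ d ih =>
    have hIH := ih (fun k => a (k + 1)) (fun k => s (k + 1)) fun k hk => by
      simpa [Nat.add_sub_add_right] using hs (k + 1) (by omega)
    have hs0 := hs 0 (Nat.zero_le _)
    have htail : ∑ k ∈ range (d + 1), a (k + 1) ≤
        ∑ k ∈ range (d + 1), max (s (k + 1)) (a (k + 1 + 1)) + a 1 := by
      rw [sum_range_succ']
      gcongr
      calc ∑ k ∈ range d, a (k + 1 + 1) ≤ ∑ k ∈ range (d + 1), a (k + 1 + 1) :=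
            sum_le_sum_of_subset (range_subset_range.2 d.le_succ)
        _ ≤ _ := sum_le_sum fun k _ => le_max_right _ _
    rw [sum_range_succ' _ (d + 1), sum_range_succ' _ (d + 1)]
    simp only [zero_add, Nat.sub_zero] at hs0 ⊢
    omega

theorem Finsupp.degree_erase_add {σ : Type*} (f : σ →₀ ℕ) (x : σ) :
    (f.erase x).degree + f x = f.degree := by
  conv_rhs => rw [← Finsupp.erase_add_single x f]
  rw [map_add, Finsupp.degree_single]

section MonomialShadow

variable {σ : Type*} [DecidableEq σ]

noncomputable def monomialShadow (M : Finset (σ →₀ ℕ)) : Finset (σ →₀ ℕ) :=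
  M.biUnion fun f => f.support.image fun x => f - Finsupp.single x 1

theorem mem_monomialShadow {M : Finset (σ →₀ ℕ)} {g : σ →₀ ℕ} :
    g ∈ monomialShadow M ↔ ∃ x, g + Finsupp.single x 1 ∈ M := by
  simp only [monomialShadow, mem_biUnion, mem_image, Finsupp.mem_support_iff]
  constructor
  · rintro ⟨f, hf, x, hx, rfl⟩
    refine ⟨x, ?_⟩
    rwa [tsub_add_cancel_of_le (Finsupp.single_le_iff.2 (Nat.one_le_iff_ne_zero.2 hx))]
  · rintro ⟨x, hx⟩
    exact ⟨_, hx, x, by simp, add_tsub_cancel_right _ _⟩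

theorem card_filter_succ_le_card_filter_monomialShadow (M : Finset (σ →₀ ℕ)) (x : σ) (k : ℕ) :
    #{f ∈ M | f x = k + 1} ≤ #{g ∈ monomialShadow M | g x = k} := by
  refine card_le_card_of_surjOn (· + Finsupp.single x 1) fun f hf => ?_
  simp only [coe_filter, Set.mem_ofPred_eq] at hf
  have hle : Finsupp.single x 1 ≤ f := Finsupp.single_le_iff.2 (by omega)
  refine ⟨f - Finsupp.single x 1, ?_, tsub_add_cancel_of_le hle⟩
  simp only [coe_filter, Set.mem_ofPred_eq, mem_monomialShadow, Finsupp.tsub_apply,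
    Finsupp.single_eq_same]
  exact ⟨⟨x, by rw [tsub_add_cancel_of_le hle]; exact hf.1⟩, by omega⟩

theorem card_monomialShadow_image_erase_le (M : Finset (σ →₀ ℕ)) (x : σ) (k : ℕ) :
    #(monomialShadow ({f ∈ M | f x = k}.image (Finsupp.erase x))) ≤
      #{g ∈ monomialShadow M | g x = k} := by
  refine card_le_card_of_injOn (· + Finsupp.single x k) (fun g hg => ?_)
    fun _ _ _ _ h => add_right_cancel h
  obtain ⟨y, hy⟩ := mem_monomialShadow.1 hg
  obtain ⟨f, hf, hfg⟩ := mem_image.1 hy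
  simp only [mem_filter] at hf
  have hx : g x + Finsupp.single y 1 x = 0 := by
    rw [← Finsupp.add_apply, ← hfg, Finsupp.erase_same]
  have hgx : g x = 0 := (Nat.add_eq_zero_iff.1 hx).1
  simp only [coe_filter, Set.mem_ofPred_eq, mem_monomialShadow, Finsupp.add_apply, hgx,
    Finsupp.single_eq_same, zero_add, and_true]
  refine ⟨y, ?_⟩
  convert hf.1 using 1
  rw [add_right_comm, ← hfg, ← hf.2, Finsupp.erase_add_single]

theorem min_card_le_card_monomialShadow (S : Finset σ) {d : ℕ} {M : Finset (σ →₀ ℕ)}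
    (hS : ∀ f ∈ M, f.support ⊆ S) (hd : ∀ f ∈ M, f.degree = d) :
    min #M d ≤ #(monomialShadow M) := by
  induction S using Finset.induction_on generalizing d M with
  | empty =>
    rcases M.eq_empty_or_nonempty with rfl | ⟨f, hf⟩
    · simp
    · have : f = 0 := Finsupp.support_eq_empty.1 (subset_empty.1 (hS f hf))
      simp [← hd f hf, this]
  | insert x S _ ih =>
    set P : ℕ → Finset (σ →₀ ℕ) := fun k => {f ∈ M | f x = k}.image (Finsupp.erase x)
    have hP (k : ℕ) (hk : k ≤ d) : min #{f ∈ M | f x = k} (d - k) ≤ #(monomialShadow (P k)) := by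
      have hinj : Set.InjOn (Finsupp.erase x) (M.filter (· x = k) : Set (σ →₀ ℕ)) := by
        intro f hf g hg hfg
        simp only [coe_filter, Set.mem_ofPred_eq] at hf hg
        rw [← Finsupp.erase_add_single x f, ← Finsupp.erase_add_single x g, hf.2, hg.2, hfg]
      rw [← card_image_of_injOn hinj]
      refine ih (fun g hg => ?_) fun g hg => ?_
      all_goals obtain ⟨f, hf, rfl⟩ := mem_image.1 hg; rw [mem_filter] at hf
      · rw [Finsupp.support_erase]
        intro y hy
        exact (mem_insert.1 (hS f hf.1 (mem_of_mem_erase hy))).resolve_left (ne_of_mem_erase hy)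
      · have := Finsupp.degree_erase_add f x
        rw [hf.2, hd f hf.1] at this
        omega
    have hxd (f) (hf : f ∈ M) : f x < d + 1 := Nat.lt_succ_of_le (hd f hf ▸ Finsupp.le_degree x f)
    calc min #M d
        = min (∑ k ∈ range (d + 1), #{f ∈ M | f x = k}) d := by
          rw [← card_eq_sum_card_fiberwise fun f hf => mem_range.2 (hxd f hf)]
      _ ≤ ∑ k ∈ range (d + 1), max #(monomialShadow (P k)) #{f ∈ M | f x = k + 1} :=
          min_sum_le_sum_max d _ _ hP
      _ ≤ ∑ k ∈ range (d + 1), #{g ∈ monomialShadow M | g x = k} :=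
          sum_le_sum fun k _ => max_le (card_monomialShadow_image_erase_le M x k)
            (card_filter_succ_le_card_filter_monomialShadow M x k)
      _ ≤ #(monomialShadow M) := by
          rw [sum_card_fiberwise_eq_card_filter]
          exact card_filter_le _ _

end MonomialShadow

namespace MonomialOrder

variable {σ R : Type*} [CommRing R] [NoZeroDivisors R] (m : MonomialOrder σ)

theorem linearIndependent_of_injective_degree {ι : Type*} {b : ι → MvPolynomial σ R}
    (hb : ∀ i, b i ≠ 0) (hinj : Function.Injective fun i => m.degree (b i)) :
    LinearIndependent R b := by
  classical
  rw [linearIndependent_iff']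
  intro s g hsum i hi
  by_contra hgi
  obtain ⟨j, hj, hmax⟩ := exists_max_image {k ∈ s | g k ≠ 0} (fun k => m.toSyn (m.degree (b k)))
    ⟨i, mem_filter.2 ⟨hi, hgi⟩⟩
  rw [mem_filter] at hj
  -- among the `b k` with `g k ≠ 0`, only `b j` has a nonzero coefficient at `m.degree (b j)`
  have hcoeff := congrArg (coeff (m.degree (b j))) hsum
  rw [coeff_sum, sum_eq_single j, coeff_smul, coeff_zero, smul_eq_mul] at hcoeff
  · exact mul_ne_zero hj.2 (m.coeff_degree_ne_zero_iff.2 (hb j)) hcoeff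
  · intro k hk hkj
    by_cases hgk : g k = 0
    · simp [hgk]
    have hlt : m.degree (b k) ≺[m] m.degree (b j) :=
      lt_of_le_of_ne (hmax k (mem_filter.2 ⟨hk, hgk⟩))
        fun h => hkj (hinj (m.toSyn.injective h))
    rw [coeff_smul, m.coeff_eq_zero_of_lt hlt, smul_zero]
  · exact fun h => absurd hj.1 h

end MonomialOrder

section Homogeneous

variable {σ K : Type*} [Field K]

theorem mul_mem_homogeneousSubmodule {ℓ G : MvPolynomial σ K}
    (hℓ : ℓ ∈ homogeneousSubmodule σ K 1) {j : ℕ} (hG : G ∈ homogeneousSubmodule σ K j) :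
    ℓ * G ∈ homogeneousSubmodule σ K (j + 1) :=
  add_comm 1 j ▸ hℓ.mul hG

theorem finrank_map_mulLeft {ℓ : MvPolynomial σ K} (hℓ0 : ℓ ≠ 0)
    (W : Submodule K (MvPolynomial σ K)) :
    finrank K (W.map (LinearMap.mulLeft K ℓ)) = finrank K W :=
  LinearEquiv.finrank_eq (Submodule.equivMapOfInjective _ (mul_right_injective₀ hℓ0) W).symm

instance [Finite σ] (j : ℕ) : FiniteDimensional K (homogeneousSubmodule σ K j) :=
  Module.Finite.iff_fg.2 (homogeneousSubmodule_fg σ K j)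

-- Truncated subtraction: meaningful for `W ≤ homogeneousSubmodule σ K d`.
noncomputable def homogeneousCodim (d : ℕ) (W : Submodule K (MvPolynomial σ K)) : ℕ :=
  finrank K (homogeneousSubmodule σ K d) - finrank K W

namespace MonomialOrder

variable (m : MonomialOrder σ)

def leadingMonomials (W : Submodule K (MvPolynomial σ K)) : Set (σ →₀ ℕ) :=
  {μ | ∃ F ∈ W, F ≠ 0 ∧ m.degree F = μ}

theorem finrank_eq_ncard_leadingMonomials {W : Submodule K (MvPolynomial σ K)}
    (hfin : (m.leadingMonomials W).Finite) : finrank K W = (m.leadingMonomials W).ncard := by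
  set S := m.leadingMonomials W
  have := hfin.fintype
  let π : W →ₗ[K] S → K := LinearMap.pi fun μ => lcoeff K μ.1 ∘ₗ W.subtype
  have hπ : Function.Injective π := by
    rw [← LinearMap.ker_eq_bot, Submodule.eq_bot_iff]
    rintro ⟨F, hF⟩ hπF
    refine Subtype.ext (by_contra fun hF0 => ?_)
    exact m.coeff_degree_ne_zero_iff.2 hF0 (congrFun hπF ⟨_, F, hF, hF0, rfl⟩)
  have : Module.Finite K W := Module.Finite.of_injective π hπ
  choose b hbW hb0 hbdeg using fun μ : S => μ.2
  have hli : LinearIndependent K fun μ : S => (⟨b μ, hbW μ⟩ : W) :=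
    LinearIndependent.of_comp W.subtype <| m.linearIndependent_of_injective_degree hb0
      fun μ ν h => Subtype.ext (by simpa [hbdeg] using h)
  rw [← Nat.card_coe_set_eq, Nat.card_eq_fintype_card]
  refine le_antisymm ?_ hli.fintype_card_le_finrank
  simpa using LinearMap.finrank_le_finrank_of_injective hπ

variable {m}

theorem leadingMonomials_subset_of_le {d : ℕ} {W : Submodule K (MvPolynomial σ K)}
    (hW : W ≤ homogeneousSubmodule σ K d) : m.leadingMonomials W ⊆ {μ | μ.degree = d} := by
  rintro _ ⟨F, hF, hF0, rfl⟩
  show (m.degree F).degree = d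
  rw [Finsupp.degree_eq_weight_one]
  exact hW hF (m.coeff_degree_ne_zero_iff.2 hF0)

theorem leadingMonomials_homogeneousSubmodule (d : ℕ) :
    m.leadingMonomials (homogeneousSubmodule σ K d) = {μ | μ.degree = d} := by
  refine (leadingMonomials_subset_of_le le_rfl).antisymm fun μ hμ => ?_
  classical
  exact ⟨monomial μ 1, isHomogeneous_monomial _ hμ, by simp,
    by rw [m.degree_monomial, if_neg one_ne_zero]⟩

variable [Finite σ]

variable (m) in
noncomputable def standardMonomials (W : Submodule K (MvPolynomial σ K)) (d : ℕ) :
    Finset (σ →₀ ℕ) :=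
  ((Finsupp.finite_of_degree_eq d).sdiff (t := m.leadingMonomials W)).toFinset

theorem card_standardMonomials {d : ℕ} {W : Submodule K (MvPolynomial σ K)}
    (hW : W ≤ homogeneousSubmodule σ K d) : #(m.standardMonomials W d) = homogeneousCodim d W := by
  have hfin := Finsupp.finite_of_degree_eq (σ := σ) d
  rw [standardMonomials, ← Set.ncard_eq_toFinset_card _ hfin.sdiff, homogeneousCodim,
    m.finrank_eq_ncard_leadingMonomials (hfin.subset (leadingMonomials_subset_of_le hW)),
    m.finrank_eq_ncard_leadingMonomials (hfin.subset (leadingMonomials_subset_of_le le_rfl)),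
    leadingMonomials_homogeneousSubmodule,
    ← Set.ncard_sdiff_add_ncard_of_subset (leadingMonomials_subset_of_le hW) hfin,
    Nat.add_sub_cancel]

theorem monomialShadow_standardMonomials_subset [DecidableEq σ] {d : ℕ}
    {W W' : Submodule K (MvPolynomial σ K)} (hX : ∀ F ∈ W, ∀ x, X x * F ∈ W') :
    monomialShadow (m.standardMonomials W' (d + 1)) ⊆ m.standardMonomials W d := by
  intro g hg
  obtain ⟨x, hx⟩ := mem_monomialShadow.1 hg
  simp only [standardMonomials, Set.Finite.mem_toFinset, Set.mem_sdiff, Set.mem_ofPred_eq,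
    map_add, Finsupp.degree_single, add_left_inj] at hx ⊢
  refine ⟨hx.1, fun ⟨F, hF, hF0, hFg⟩ =>
    hx.2 ⟨X x * F, hX F hF x, mul_ne_zero (X_ne_zero x) hF0, ?_⟩⟩
  rw [m.degree_mul (X_ne_zero x) hF0, m.degree_X, hFg, add_comm]

end MonomialOrder

theorem homogeneousCodim_succ_le [Finite σ] {d : ℕ} {W W' : Submodule K (MvPolynomial σ K)}
    (hW : W ≤ homogeneousSubmodule σ K d) (hW' : W' ≤ homogeneousSubmodule σ K (d + 1))
    (hX : ∀ F ∈ W, ∀ x, X x * F ∈ W') (h : homogeneousCodim d W ≤ d) :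
    homogeneousCodim (d + 1) W' ≤ homogeneousCodim d W := by
  classical
  have := Fintype.ofFinite σ
  let : LinearOrder σ := LinearOrder.lift' (Finite.equivFin σ) (Equiv.injective _)
  let m : MonomialOrder σ := .lex
  have hshadow := min_card_le_card_monomialShadow (M := m.standardMonomials W' (d + 1)) univ
    (fun f _ => subset_univ f.support) fun f hf => by
      simp only [MonomialOrder.standardMonomials, Set.Finite.mem_toFinset] at hf
      exact hf.1
  have hsub := card_le_card (m.monomialShadow_standardMonomials_subset (d := d) hX)
  rw [MonomialOrder.card_standardMonomials hW, MonomialOrder.card_standardMonomials hW'] at *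
  omega

end Homogeneous

section PointsOfProjectiveSpace

variable {N : ℕ}

theorem exists_linForm_eval_ne_zero (Z : Finset (Fin N → ℂ)) (hZ : ∀ v ∈ Z, v ≠ 0) :
    ∃ a : Fin N → ℂ, ∀ v ∈ Z, eval v (linForm a) ≠ 0 := by
  by_contra! h
  have hcover : ⋃ v : Z, ((LinearMap.ker (Fintype.linearCombination ℂ v.1) : Subspace ℂ _) :
      Set (Fin N → ℂ)) = Set.univ := by
    refine Set.eq_univ_of_forall fun a => ?_
    obtain ⟨v, hv, hav⟩ := h a
    refine Set.mem_iUnion.2 ⟨⟨v, hv⟩, ?_⟩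
    simpa [linForm, Fintype.linearCombination_apply, mul_comm] using hav
  obtain ⟨⟨v, hv⟩, htop⟩ := Subspace.exists_eq_top_of_iUnion_eq_univ hcover
  refine hZ v hv (funext fun i => ?_)
  simpa using LinearMap.congr_fun (LinearMap.ker_eq_top.1 htop) (Pi.single i 1)

theorem linForm_mem_homogeneousSubmodule (a : Fin N → ℂ) :
    linForm a ∈ homogeneousSubmodule (Fin N) ℂ 1 :=
  Submodule.sum_mem _ fun i _ => isHomogeneous_C_mul_X (a i) i

theorem exists_mem_homogeneousSubmodule_one_eval_ne_zero {n : ℕ} (Z : Finset (Fin (n + 1) → ℂ))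
    (hZ : ∀ v ∈ Z, v ≠ 0) :
    ∃ ℓ ∈ homogeneousSubmodule (Fin (n + 1)) ℂ 1, ℓ ≠ 0 ∧ ∀ v ∈ Z, eval v ℓ ≠ 0 := by
  obtain ⟨a, ha⟩ := exists_linForm_eval_ne_zero (insert (Pi.single 0 1) Z) (by simpa using hZ)
  refine ⟨linForm a, linForm_mem_homogeneousSubmodule a, fun h => ?_,
    fun v hv => ha v (mem_insert_of_mem hv)⟩
  exact ha _ (mem_insert_self _ _) (by rw [h, map_zero])

variable {Z : Finset (Fin N → ℂ)}

theorem mem_idealPiece {j : ℕ} {F : MvPolynomial (Fin N) ℂ} :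
    F ∈ idealPiece Z j ↔ F ∈ homogeneousSubmodule (Fin N) ℂ j ∧ ∀ v ∈ Z, eval v F = 0 := by
  simp [idealPiece, pointsIdeal, Submodule.mem_iInf, and_comm]

theorem idealPiece_eq_map_ker (j : ℕ) :
    idealPiece Z j =
      (LinearMap.ker (evalMap Z j)).map (homogeneousSubmodule (Fin N) ℂ j).subtype := by
  ext F
  simp [mem_idealPiece, evalMap, funext_iff, and_comm]

instance (j : ℕ) : FiniteDimensional ℂ (idealPiece Z j) :=
  Submodule.finiteDimensional_of_le inf_le_right

theorem hilb_add_finrank_idealPiece (j : ℕ) :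
    hilb Z j + finrank ℂ (idealPiece Z j) = finrank ℂ (homogeneousSubmodule (Fin N) ℂ j) := by
  rw [hilb, if_neg (by omega), Int.toNat_natCast, idealPiece_eq_map_ker,
    Submodule.finrank_map_subtype_eq]
  exact_mod_cast LinearMap.finrank_range_add_finrank_ker _

theorem X_mul_mem_idealPiece {j : ℕ} {F : MvPolynomial (Fin N) ℂ} (hF : F ∈ idealPiece Z j)
    (x : Fin N) : X x * F ∈ idealPiece Z (j + 1) := by
  rw [mem_idealPiece] at hF ⊢
  refine ⟨mul_mem_homogeneousSubmodule (isHomogeneous_X ℂ x) hF.1, fun v hv => ?_⟩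
  rw [map_mul, hF.2 v hv, mul_zero]

variable {ℓ : MvPolynomial (Fin N) ℂ}

theorem idealPiece_inf_map_mulLeft (hℓ : ℓ ∈ homogeneousSubmodule (Fin N) ℂ 1)
    (hℓZ : ∀ v ∈ Z, eval v ℓ ≠ 0) (j : ℕ) :
    idealPiece Z (j + 1) ⊓ (homogeneousSubmodule (Fin N) ℂ j).map (LinearMap.mulLeft ℂ ℓ) =
      (idealPiece Z j).map (LinearMap.mulLeft ℂ ℓ) := by
  ext F
  simp only [Submodule.mem_inf, Submodule.mem_map, LinearMap.mulLeft_apply, mem_idealPiece]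
  constructor
  · rintro ⟨⟨-, hFZ⟩, G, hG, rfl⟩
    refine ⟨G, ⟨hG, fun v hv => ?_⟩, rfl⟩
    simpa [hℓZ v hv] using hFZ v hv
  · rintro ⟨G, ⟨hG, hGZ⟩, rfl⟩
    exact ⟨⟨mul_mem_homogeneousSubmodule hℓ hG, fun v hv => by simp [hGZ v hv]⟩, G, hG, rfl⟩

variable (Z ℓ) in
/-- The degree-`(k + 1)` piece of the ideal `I_Z + (ℓ)`. -/
noncomputable def reductionPiece (k : ℕ) : Submodule ℂ (MvPolynomial (Fin N) ℂ) :=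
  idealPiece Z (k + 1) ⊔ (homogeneousSubmodule (Fin N) ℂ k).map (LinearMap.mulLeft ℂ ℓ)

theorem reductionPiece_le (hℓ : ℓ ∈ homogeneousSubmodule (Fin N) ℂ 1) (k : ℕ) :
    reductionPiece Z ℓ k ≤ homogeneousSubmodule (Fin N) ℂ (k + 1) := by
  refine sup_le inf_le_right ?_
  rintro _ ⟨G, hG, rfl⟩
  exact mul_mem_homogeneousSubmodule hℓ hG

theorem X_mul_mem_reductionPiece {k : ℕ} {F : MvPolynomial (Fin N) ℂ}
    (hF : F ∈ reductionPiece Z ℓ k) (x : Fin N) : X x * F ∈ reductionPiece Z ℓ (k + 1) := by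
  obtain ⟨G, hG, _, ⟨H, hH, rfl⟩, rfl⟩ := Submodule.mem_sup.1 hF
  refine Submodule.mem_sup.2 ⟨X x * G, X_mul_mem_idealPiece hG x, ℓ * (X x * H),
    ⟨X x * H, mul_mem_homogeneousSubmodule (isHomogeneous_X ℂ x) hH, rfl⟩, ?_⟩
  simp only [LinearMap.mulLeft_apply]
  ring

theorem Dhilb_succ_eq_homogeneousCodim (hℓ : ℓ ∈ homogeneousSubmodule (Fin N) ℂ 1) (hℓ0 : ℓ ≠ 0)
    (hℓZ : ∀ v ∈ Z, eval v ℓ ≠ 0) (k : ℕ) :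
    Dhilb Z ((k : ℤ) + 1) = homogeneousCodim (k + 1) (reductionPiece Z ℓ k) := by
  have hdim := Submodule.finrank_sup_add_finrank_inf_eq (idealPiece Z (k + 1))
    ((homogeneousSubmodule (Fin N) ℂ k).map (LinearMap.mulLeft ℂ ℓ))
  rw [idealPiece_inf_map_mulLeft hℓ hℓZ, finrank_map_mulLeft hℓ0, finrank_map_mulLeft hℓ0] at hdim
  have hk := hilb_add_finrank_idealPiece (Z := Z) k
  have hk1 := hilb_add_finrank_idealPiece (Z := Z) (k + 1)
  have hle := Submodule.finrank_mono (reductionPiece_le (Z := Z) hℓ k)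
  rw [Dhilb, homogeneousCodim, add_sub_cancel_right, Nat.cast_sub hle]
  rw [reductionPiece] at hle ⊢
  push_cast at hk1 ⊢
  omega

end PointsOfProjectiveSpace

/-- if `i > 0` and `Dh_Z(i) ≤ i`, then `Dh_Z(i+1) ≤ Dh_Z(i)`; consequently
if moreover `Dh_Z(i) = 0` then `Dh_Z(j) = 0` for all `j ≥ i`. -/
theorem stmt_13 {n : ℕ} (Z : Finset (Fin (n + 1) → ℂ)) (hZ : ValidPoints Z)
    (i : ℕ) (hi : 0 < i) (hbound : Dhilb Z (i : ℤ) ≤ (i : ℤ)) :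
    Dhilb Z ((i : ℤ) + 1) ≤ Dhilb Z (i : ℤ) ∧
    (Dhilb Z (i : ℤ) = 0 → ∀ j : ℤ, (i : ℤ) ≤ j → Dhilb Z j = 0) := by
  obtain ⟨ℓ, hℓ, hℓ0, hℓZ⟩ := exists_mem_homogeneousSubmodule_one_eval_ne_zero Z hZ.1
  set c : ℕ → ℕ := fun k => homogeneousCodim (k + 1) (reductionPiece Z ℓ k)
  have hDc (k : ℕ) : Dhilb Z ((k : ℤ) + 1) = c k := Dhilb_succ_eq_homogeneousCodim hℓ hℓ0 hℓZ k
  have hc (k : ℕ) (hk : c k ≤ k + 1) : c (k + 1) ≤ c k :=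
    homogeneousCodim_succ_le (reductionPiece_le hℓ k) (reductionPiece_le hℓ (k + 1))
      (fun F hF x => X_mul_mem_reductionPiece hF x) hk
  obtain ⟨k, rfl⟩ : ∃ k, i = k + 1 := ⟨i - 1, by omega⟩
  rw [Nat.cast_succ, hDc] at hbound ⊢
  refine ⟨?_, fun h0 j hj => ?_⟩
  · rw [← Nat.cast_succ, hDc]
    exact_mod_cast hc k (by exact_mod_cast hbound)
  · have hzero (m : ℕ) : c (k + m) = 0 := by
      induction m with
      | zero => exact_mod_cast h0
      | succ m ih => have := hc (k + m) (by omega); rw [← add_assoc]; omega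
    obtain ⟨m, rfl⟩ : ∃ m : ℕ, j = ((k + m : ℕ) : ℤ) + 1 := ⟨(j - k - 1).toNat, by omega⟩
    rw [hDc, hzero]
    rfl
end

section
/- Let Z ⊂ ℙⁿ be a finite set of points satisfying the Cayley–Bacharach property CB(i). Then for every integer j with 0 ≤ j ≤ i+1, one has Dh_Z(0) + Dh_Z(1) + ⋯ + Dh_Z(j) ≤ Dh_Z(i+1−j) + Dh_Z(i+2−j) + ⋯ + Dh_Z(i+1). -/
open MvPolynomial BigOperators

/-!
Write `E_t` for the space of restrictions to `Z` of forms of degree `t`, so that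
`h_Z(t) = dim E_t`, `E_a E_b ⊆ E_{a+b}`, and `CB(i)` says that no indicator `e_P` lies in `E_i`.
The claim amounts to `h_Z(j) + h_Z(i-j) ≤ h_Z(i+1)` for `j ≤ i`; we induct on `ℓ(Z)`.

If every `e_P` lies in `E_{i+1}`, then `h_Z(i+1) = ℓ(Z)`. By `CB(i)` and genericity there is a
functional `φ` killing `E_i` with `φ(e_P) ≠ 0` for all `P`; then `(u, w) ↦ φ(u w)` is a
nondegenerate pairing for which `E_j` and `E_{i-j}` are orthogonal, so `h_Z(j) + h_Z(i-j) ≤ ℓ(Z)`.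

Otherwise some `e_{P₀}` is not in `E_{i+1}`, hence in no `E_t` with `t ≤ i+1`, so removing `P₀`
does not change `h` in degrees `≤ i+1`. The smaller set still satisfies `CB(i)`: a form of
degree `i` separating `Q` in `Z ∖ {P₀}` takes the shape `e_Q + λ e_{P₀}` on `Z`, with `λ ≠ 0` by
`CB(i)` for `Z`; multiplying it by a linear form vanishing at `Q` but not at `P₀` would put
`e_{P₀}` into `E_{i+1}`.
-/

open Module Finset

theorem Module.Dual.exists_forall_apply_ne_zero {K E ι : Type*} [DivisionRing K] [Infinite K]
    [AddCommGroup E] [Module K E] [Finite ι] {f : ι → Dual K E} (hf : ∀ i, f i ≠ 0) :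
    ∃ x, ∀ i, f i x ≠ 0 := by
  by_contra! h
  obtain ⟨i, hi⟩ := Subspace.exists_eq_top_of_iUnion_eq_univ (p := fun i => LinearMap.ker (f i))
    (Set.eq_univ_of_forall fun x => Set.mem_iUnion.2 (h x))
  exact hf i (LinearMap.ker_eq_top.1 hi)

theorem Submodule.exists_mem_dualAnnihilator_forall_ne_zero {K E ι : Type*} [Field K]
    [Infinite K] [AddCommGroup E] [Module K E] [Finite ι] {W : Submodule K E} {m : ι → E}
    (hm : ∀ i, m i ∉ W) : ∃ φ ∈ W.dualAnnihilator, ∀ i, φ (m i) ≠ 0 := by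
  have hne : ∀ i, (Dual.eval K E (m i)).domRestrict W.dualAnnihilator ≠ 0 := fun i h => by
    obtain ⟨φ, hφm, hφW⟩ := W.exists_dual_map_eq_bot_of_notMem (hm i) inferInstance
    have hφ : φ ∈ W.dualAnnihilator :=
      (Submodule.mem_dualAnnihilator _).2 fun w hw => LinearMap.le_ker_iff_map.2 hφW hw
    exact hφm (DFunLike.congr_fun h ⟨φ, hφ⟩)
  obtain ⟨φ, hφ⟩ := Module.Dual.exists_forall_apply_ne_zero (E := W.dualAnnihilator) hne
  exact ⟨φ, φ.2, hφ⟩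

theorem Module.exists_dual_forall_mem_apply_ne_zero {K E : Type*} [Field K] [Infinite K]
    [AddCommGroup E] [Module K E] {s : Finset E} (hs : ∀ v ∈ s, v ≠ 0) :
    ∃ φ : Dual K E, ∀ v ∈ s, φ v ≠ 0 := by
  obtain ⟨φ, -, hφ⟩ := (⊥ : Submodule K E).exists_mem_dualAnnihilator_forall_ne_zero
    (m := fun v : s => v.1) fun v => by simpa using hs v.1 v.2
  exact ⟨φ, fun v hv => hφ ⟨v, hv⟩⟩

theorem Pi.mul_single_one {ι K : Type*} [DecidableEq ι] [Semiring K] (f : ι → K) (i : ι) :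
    f * Pi.single i 1 = f i • Pi.single i 1 := by
  ext j
  by_cases h : j = i <;> simp [h]

theorem finrank_add_finrank_le_of_dual_mul_eq_zero {K ι : Type*} [Field K] [Fintype ι]
    [DecidableEq ι] {φ : Dual K (ι → K)} (hφ : ∀ v, φ (Pi.single v 1) ≠ 0)
    {U V : Submodule K (ι → K)} (hUV : ∀ u ∈ U, ∀ w ∈ V, φ (u * w) = 0) :
    finrank K U + finrank K V ≤ Fintype.card ι := by
  let B : LinearMap.BilinForm K (ι → K) := (LinearMap.mul K (ι → K)).compr₂ φ
  have hB : B.Nondegenerate := .ofSeparatingLeft fun u hu => funext fun v => by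
    simpa [B, Pi.mul_single_one, hφ v] using hu (Pi.single v 1)
  have hUV : U ≤ B.orthogonal V := fun u hu w hw => by simpa [B, mul_comm] using hUV u hu w hw
  have hU := Submodule.finrank_mono hUV
  have hV := Submodule.finrank_le V
  rw [LinearMap.BilinForm.finrank_orthogonal hB, finrank_fintype_fun_eq_card] at hU
  rw [finrank_fintype_fun_eq_card] at hV
  omega

theorem ValidPoints.mono {N : ℕ} {A B : Finset (Fin N → ℂ)} (hAB : A ⊆ B) (h : ValidPoints B) :
    ValidPoints A :=
  ⟨fun v hv => h.1 v (hAB hv), fun v hv w hw => h.2 v (hAB hv) w (hAB hw)⟩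

section

variable {N : ℕ}

noncomputable def evalRange (Z : Finset (Fin N → ℂ)) (t : ℕ) : Submodule ℂ (Z → ℂ) :=
  LinearMap.range (evalMap Z t)

section evalRange

variable {Z : Finset (Fin N → ℂ)} {a b t : ℕ} {f g : Z → ℂ}

theorem mem_evalRange : f ∈ evalRange Z t ↔
    ∃ F : MvPolynomial (Fin N) ℂ, F.IsHomogeneous t ∧ ∀ v : Z, eval v.1 F = f v := by
  constructor
  · rintro ⟨⟨F, hF⟩, rfl⟩
    exact ⟨F, hF, fun v => rfl⟩
  · rintro ⟨F, hF, hFf⟩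
    exact ⟨⟨F, hF⟩, funext hFf⟩

theorem mul_mem_evalRange (hf : f ∈ evalRange Z a) (hg : g ∈ evalRange Z b) :
    f * g ∈ evalRange Z (a + b) := by
  obtain ⟨F, hF, hFf⟩ := mem_evalRange.1 hf
  obtain ⟨G, hG, hGg⟩ := mem_evalRange.1 hg
  exact mem_evalRange.2 ⟨F * G, hF.mul hG, fun v => by simp [hFf, hGg]⟩

theorem pow_mem_evalRange (hf : f ∈ evalRange Z 1) (k : ℕ) : f ^ k ∈ evalRange Z k := by
  induction k with
  | zero => exact mem_evalRange.2 ⟨1, isHomogeneous_one _ _, fun v => by simp⟩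
  | succ k ih => simpa [pow_succ] using mul_mem_evalRange ih hf

theorem dual_mem_evalRange (φ : Dual ℂ (Fin N → ℂ)) : (fun v : Z => φ v) ∈ evalRange Z 1 := by
  refine mem_evalRange.2 ⟨linForm fun k => φ (Pi.single k 1), ?_, fun v => ?_⟩
  · exact IsHomogeneous.sum _ _ _ fun k _ => isHomogeneous_C_mul_X _ k
  · conv_rhs => rw [pi_eq_sum_univ' v.1]
    simp [linForm, mul_comm]

theorem evalRange_eq_top (h : ∀ P : Z, Pi.single P 1 ∈ evalRange Z t) : evalRange Z t = ⊤ := by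
  rw [eq_top_iff, ← (Pi.basisFun ℂ Z).span_eq, Submodule.span_le]
  rintro _ ⟨P, rfl⟩
  simpa using h P

theorem single_mem_evalRange_of_le (hZ : ∀ v ∈ Z, v ≠ 0) {P : Z} (hab : a ≤ b)
    (h : Pi.single P 1 ∈ evalRange Z a) : Pi.single P 1 ∈ evalRange Z b := by
  obtain ⟨φ, hφ⟩ := exists_dual_forall_mem_apply_ne_zero (K := ℂ) hZ
  have hmul := mul_mem_evalRange (pow_mem_evalRange (dual_mem_evalRange (Z := Z) φ) (b - a)) h
  rwa [Nat.sub_add_cancel hab, Pi.mul_single_one, Pi.pow_apply,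
    Submodule.smul_mem_iff _ (pow_ne_zero _ (hφ P.1 P.2))] at hmul

theorem CayleyBacharach.single_notMem_evalRange {i : ℕ} (hCB : CayleyBacharach Z i) (P : Z) :
    Pi.single P 1 ∉ evalRange Z i := fun h => by
  obtain ⟨F, hF, hFP⟩ := mem_evalRange.1 h
  have hvanish : eval P.1 F = 0 := hCB P.1 P.2 F hF fun v hv => by
    rw [hFP ⟨v, mem_of_mem_erase hv⟩, Pi.single_eq_of_ne]
    exact fun h => (mem_erase.1 hv).1 (congrArg Subtype.val h)
  simp [hFP] at hvanish

end evalRange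

theorem ValidPoints.exists_dual_separating {Z : Finset (Fin N → ℂ)} (hZ : ValidPoints Z)
    {v w : Fin N → ℂ} (hv : v ∈ Z) (hw : w ∈ Z) (hvw : v ≠ w) :
    ∃ ψ : Dual ℂ (Fin N → ℂ), ψ v = 0 ∧ ψ w ≠ 0 := by
  have hw' : w ∉ Submodule.span ℂ {v} := fun h => by
    obtain ⟨c, hc⟩ := Submodule.mem_span_singleton.1 h
    exact hZ.2 v hv w hw hvw c hc.symm
  obtain ⟨ψ, hψw, hψv⟩ := Submodule.exists_dual_map_eq_bot_of_notMem hw' inferInstance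
  exact ⟨ψ, LinearMap.le_ker_iff_map.2 hψv (Submodule.mem_span_singleton_self v), hψw⟩

def restrictErase (Z : Finset (Fin N → ℂ)) (p : Fin N → ℂ) :
    (Z → ℂ) →ₗ[ℂ] (Z.erase p → ℂ) :=
  LinearMap.funLeft ℂ ℂ fun v => ⟨v.1, mem_of_mem_erase v.2⟩

section restrictErase

variable {Z : Finset (Fin N → ℂ)} {i t : ℕ}

@[simp]
theorem restrictErase_apply {p : Fin N → ℂ} (f : Z → ℂ) (v : Z.erase p) :
    restrictErase Z p f v = f ⟨v.1, mem_of_mem_erase v.2⟩ :=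
  rfl

theorem evalRange_erase (p : Fin N → ℂ) (t : ℕ) :
    evalRange (Z.erase p) t = (evalRange Z t).map (restrictErase Z p) := by
  rw [evalRange, evalRange, ← LinearMap.range_comp]
  rfl

theorem eq_smul_single_of_restrictErase_eq_zero {P : Z} {f : Z → ℂ}
    (hf : restrictErase Z P.1 f = 0) : f = f P • Pi.single P 1 := by
  ext v
  by_cases hv : v = P
  · simp [hv]
  · have hv' : v.1 ∈ Z.erase P.1 := mem_erase.2 ⟨fun h => hv (Subtype.ext h), v.2⟩
    simpa [hv] using congrFun hf ⟨v.1, hv'⟩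

theorem restrictErase_single (P : Z) (Q : Z.erase P.1) :
    restrictErase Z P.1 (Pi.single ⟨Q.1, mem_of_mem_erase Q.2⟩ 1) = Pi.single Q 1 := by
  ext v
  simp only [restrictErase_apply, Pi.single_apply, Subtype.ext_iff]

theorem finrank_evalRange_erase {P : Z} (hP : Pi.single P 1 ∉ evalRange Z t) :
    finrank ℂ (evalRange (Z.erase P.1) t) = finrank ℂ (evalRange Z t) := by
  have hinj : Function.Injective (restrictErase Z P.1 ∘ₗ (evalRange Z t).subtype) := by
    refine (injective_iff_map_eq_zero _).2 fun f hf => ?_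
    have hfP := eq_smul_single_of_restrictErase_eq_zero hf
    have hP0 : f.1 P = 0 := by
      by_contra hne
      exact hP ((Submodule.smul_mem_iff _ hne).1 (hfP ▸ f.2))
    exact Subtype.ext (by simpa [hP0] using hfP)
  rw [← LinearMap.finrank_range_of_inj hinj, LinearMap.range_comp, Submodule.range_subtype,
    evalRange_erase]

theorem single_notMem_evalRange_erase (hZ : ValidPoints Z) {P₀ : Z}
    (hP₀ : Pi.single P₀ 1 ∉ evalRange Z (i + 1)) (hCB : ∀ P : Z, Pi.single P 1 ∉ evalRange Z i)
    (Q : Z.erase P₀.1) : Pi.single Q 1 ∉ evalRange (Z.erase P₀.1) i := by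
  intro hQ
  rw [evalRange_erase] at hQ
  obtain ⟨u, hu, huQ⟩ := hQ
  set Q' : Z := ⟨Q.1, mem_of_mem_erase Q.2⟩
  have hQ'P₀ : Q' ≠ P₀ := fun h => (mem_erase.1 Q.2).1 (congrArg Subtype.val h)
  have hdecomp : u - Pi.single Q' 1 = u P₀ • Pi.single P₀ 1 := by
    have h := eq_smul_single_of_restrictErase_eq_zero (P := P₀) (f := u - Pi.single Q' 1)
      (by rw [map_sub, huQ, restrictErase_single, sub_self])
    simpa [Pi.single_eq_of_ne hQ'P₀.symm] using h
  by_cases hu0 : u P₀ = 0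
  · rw [hu0, zero_smul, sub_eq_zero] at hdecomp
    exact hCB Q' (hdecomp ▸ hu)
  · obtain ⟨ψ, hψQ, hψP₀⟩ := hZ.exists_dual_separating Q'.2 P₀.2 fun h => hQ'P₀ (Subtype.ext h)
    have hmul := mul_mem_evalRange (dual_mem_evalRange (Z := Z) ψ) hu
    rw [← sub_add_cancel u (Pi.single Q' 1), hdecomp, mul_add, mul_smul_comm, Pi.mul_single_one,
      Pi.mul_single_one, smul_smul, add_comm 1 i] at hmul
    simp only [hψQ, zero_smul, add_zero] at hmul
    exact hP₀ ((Submodule.smul_mem_iff _ (mul_ne_zero hu0 hψP₀)).1 hmul)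

end restrictErase

section HilbertFunction

variable {Z : Finset (Fin N → ℂ)} {i j : ℕ}

theorem finrank_evalRange_add_finrank_le_card (hCB : ∀ P : Z, Pi.single P 1 ∉ evalRange Z i)
    (hij : j ≤ i) : finrank ℂ (evalRange Z j) + finrank ℂ (evalRange Z (i - j)) ≤ Z.card := by
  obtain ⟨φ, hφE, hφ⟩ := (evalRange Z i).exists_mem_dualAnnihilator_forall_ne_zero hCB
  rw [← Fintype.card_coe Z]
  refine finrank_add_finrank_le_of_dual_mul_eq_zero hφ fun u hu w hw => ?_
  refine (Submodule.mem_dualAnnihilator φ).1 hφE _ ?_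
  simpa [Nat.add_sub_cancel' hij] using mul_mem_evalRange hu hw

theorem finrank_evalRange_add_finrank_le (hZ : ValidPoints Z)
    (hCB : ∀ P : Z, Pi.single P 1 ∉ evalRange Z i) (hij : j ≤ i) :
    finrank ℂ (evalRange Z j) + finrank ℂ (evalRange Z (i - j)) ≤
      finrank ℂ (evalRange Z (i + 1)) := by
  induction Z using Finset.strongInduction with
  | H Z ih =>
    by_cases hsep : ∀ P : Z, Pi.single P 1 ∈ evalRange Z (i + 1)
    · rw [evalRange_eq_top hsep, finrank_top, finrank_fintype_fun_eq_card, Fintype.card_coe]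
      exact finrank_evalRange_add_finrank_le_card hCB hij
    obtain ⟨P₀, hP₀⟩ := not_forall.1 hsep
    have hP₀_le : ∀ t ≤ i + 1, Pi.single P₀ 1 ∉ evalRange Z t :=
      fun t ht h => hP₀ (single_mem_evalRange_of_le hZ.1 ht h)
    have IH := ih (Z.erase P₀.1) (erase_ssubset P₀.2) (hZ.mono (erase_subset _ _))
      (single_notMem_evalRange_erase hZ hP₀ hCB)
    rwa [finrank_evalRange_erase (hP₀_le j (by omega)),
      finrank_evalRange_erase (hP₀_le (i - j) (by omega)),
      finrank_evalRange_erase (hP₀_le (i + 1) le_rfl)] at IH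

theorem hilb_natCast_s14 (Z : Finset (Fin N → ℂ)) (t : ℕ) :
    hilb Z t = finrank ℂ (evalRange Z t) := by
  rw [hilb, if_neg (not_lt.2 (Int.natCast_nonneg t)), Int.toNat_natCast, evalRange]

theorem hilb_of_neg (Z : Finset (Fin N → ℂ)) {t : ℤ} (ht : t < 0) : hilb Z t = 0 :=
  if_pos ht

theorem sum_range_Dhilb (Z : Finset (Fin N → ℂ)) (a : ℤ) (m : ℕ) :
    ∑ t ∈ range (m + 1), Dhilb Z (a + t) = hilb Z (a + m) - hilb Z (a - 1) := by
  let g : ℕ → ℤ := fun t => hilb Z (a - 1 + t)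
  have hD : ∀ t : ℕ, Dhilb Z (a + t) = g (t + 1) - g t := fun t => by
    simp only [Dhilb, g]
    push_cast
    ring_nf
  rw [sum_congr rfl fun t _ => hD t, sum_range_sub]
  simp only [g]
  push_cast
  ring_nf

end HilbertFunction

end

/-- if `Z` satisfies the Cayley–Bacharach property `CB(i)`, then for every
`0 ≤ j ≤ i + 1` one has `Dh_Z(0) + ⋯ + Dh_Z(j) ≤ Dh_Z(i+1−j) + ⋯ + Dh_Z(i+1)`. -/
theorem stmt_14 {n : ℕ} (Z : Finset (Fin (n + 1) → ℂ)) (hZ : ValidPoints Z)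
    (i : ℕ) (hCB : CayleyBacharach Z i) :
    ∀ j : ℕ, j ≤ i + 1 →
      ∑ t ∈ Finset.range (j + 1), Dhilb Z (t : ℤ) ≤
        ∑ t ∈ Finset.range (j + 1), Dhilb Z ((i : ℤ) + 1 - (j : ℤ) + (t : ℤ)) := by
  intro j hj
  have hlhs := sum_range_Dhilb Z 0 j
  simp only [zero_add, zero_sub, hilb_of_neg Z neg_one_lt_zero, sub_zero] at hlhs
  rw [hlhs, sum_range_Dhilb, sub_add_cancel, sub_right_comm, add_sub_cancel_right]
  obtain hji | rfl : j ≤ i ∨ j = i + 1 := by omega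
  · have key := finrank_evalRange_add_finrank_le hZ hCB.single_notMem_evalRange hji
    rw [show (i : ℤ) - j = ((i - j : ℕ) : ℤ) by omega, show (i : ℤ) + 1 = ((i + 1 : ℕ) : ℤ) by
      push_cast; rfl, hilb_natCast_s14, hilb_natCast_s14, hilb_natCast_s14]
    omega
  · rw [show (i : ℤ) - (i + 1 : ℕ) = -1 by push_cast; ring, hilb_of_neg Z neg_one_lt_zero]
    push_cast
    omega
end
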